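/- Let u ≥ 2, i ≥ 2, and k even with 4 ≤ k ≤ 2i. Set q = ⌊u·P_{2i+1}(u)/P_k(u)⌋ and r = P_{2i+1}(u) − q·(P_k(u)/u). Then for 0 ≤ p ≤ q: if u·r·P_{2i}(u) > (P_{k-2}(u)/u − (u²+1)·r)·P_{2i+1}(u), then g_p(P_{2i+1}(u), P_{2i+3}(u), P_{2i+k+1}(u)) = (r−1)·P_{2i+3}(u) + (q+p)·P_{2i+k+1}(u) − P_{2i+1}(u); otherwise g_p(P_{2i+1}(u), P_{2i+3}(u), P_{2i+k+1}(u)) = (P_k(u)/u − 1)·P_{2i+3}(u) + (q+p−1)·P_{2i+k+1}(u) − P_{2i+1}(u). -/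

import Mathlib

def pell (u : ℕ) : ℕ → ℕ
  | 0 => 0
  | 1 => 1
  | n + 2 => u * pell u (n + 1) + pell u n


noncomputable def reps (a b c m : ℕ) : ℕ :=
  Nat.card {t : ℕ × ℕ × ℕ // t.1 * a + t.2.1 * b + t.2.2 * c = m}

/-!
Write `a = P_{2i+1}`, `b = P_{2i+3}`, `c = P_{2i+k+1}`, `L = P_k / u`, `E = P_{k-2} / u` and
`a = q L + r` with `r < L`. The identity `P_k P_{n+2} = u P_{n+k} + P_{k-2} P_n` gives
`L b = c + E a`, so `y b + z c ≡ (y + z L) b [MOD a]`: as `b` is a unit mod `a`, the residue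
of `y b + z c` is governed by the weight `y + z L` mod `a`, and the representations of `m`
correspond to the pairs `(y, z)` in the residue class of `m` with `y b + z c ≤ m`.

Along a ladder `(t + j L, s - j)` the weight is constant and the value grows by `E a ≤ c` per
step. Two ladders, of weights `n` and `n + a`, provide `p + 1` pairs in every residue class
with value at most `G = max ((r - 1) b + (q + p) c) ((L - 1) b + (q + p - 1) c)`, so every
`m > G - a` has more than `p` representations. Conversely, a pair in the class of `G` whose weight
is at least that of the minimal pair `(t, s)` of `G` has value at least `G`; so the
representations of `G - a` have weight below `p L`, and are determined by their `z < p`. The two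
candidates for `G` differ by `r b - E a`, which decides between the two cases.
-/

section PellNumbers

variable {u : ℕ}

theorem pell_add_two (u n : ℕ) : pell u (n + 2) = u * pell u (n + 1) + pell u n := rfl

theorem pell_add_three (u n : ℕ) :
    pell u (n + 3) = (u ^ 2 + 1) * pell u (n + 1) + u * pell u n := by
  rw [pell_add_two, pell_add_two]; ring

theorem pell_pos (hu : 0 < u) : ∀ n, 0 < pell u (n + 1)
  | 0 => Nat.one_pos
  | n + 1 => Nat.add_pos_left (Nat.mul_pos hu (pell_pos hu n)) _

theorem pell_mono (hu : 0 < u) : Monotone (pell u) := by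
  refine monotone_nat_of_le_succ fun n => ?_
  cases n with
  | zero => exact Nat.zero_le _
  | succ n => exact le_add_right (Nat.le_mul_of_pos_left _ hu)

theorem dvd_pell_of_even (u : ℕ) {n : ℕ} (hn : Even n) : u ∣ pell u n := by
  obtain ⟨m, rfl⟩ := hn.two_dvd
  clear hn
  induction m with
  | zero => exact dvd_zero u
  | succ m ih => exact dvd_add (dvd_mul_right u _) ih

theorem pell_two_mul_add_one_modEq (u n : ℕ) : pell u (2 * n + 1) ≡ 1 [MOD u] := by
  induction n with
  | zero => rfl
  | succ n ih => exact (Nat.mul_add_mod u _ _).trans ih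

theorem pell_coprime_pell_succ (u : ℕ) : ∀ n, Nat.Coprime (pell u n) (pell u (n + 1))
  | 0 => Nat.coprime_one_right 0
  | n + 1 => (Nat.coprime_mul_right_add_right _ _ _).mpr (pell_coprime_pell_succ u n).symm

theorem pell_coprime_pell_add_two_of_odd (u n : ℕ) :
    Nat.Coprime (pell u (2 * n + 1)) (pell u (2 * n + 3)) := by
  have hu : Nat.Coprime (pell u (2 * n + 1)) u := by
    rw [Nat.Coprime, (pell_two_mul_add_one_modEq u n).gcd_eq, Nat.gcd_one_left]
  rw [pell_add_two, Nat.coprime_add_self_right]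
  exact hu.mul_right (pell_coprime_pell_succ u _)

theorem pell_add_two_mul_pell_add_two (u : ℕ) : ∀ k n,
    pell u (k + 2) * pell u (n + 2) = u * pell u (n + k + 2) + pell u k * pell u n
  | 0, n => by simp [pell]
  | 1, n => by
    rw [pell_add_three, pell_add_two u (n + 1), pell_add_two u n]
    simp only [pell, mul_one, mul_zero, add_zero, one_mul]
    ring
  | k + 2, n => by
    have h0 := pell_add_two_mul_pell_add_two u k n
    have h1 : pell u (k + 3) * pell u (n + 2) =
        u * pell u (n + k + 3) + pell u (k + 1) * pell u n :=
      pell_add_two_mul_pell_add_two u (k + 1) n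
    show pell u (k + 4) * pell u (n + 2) = u * pell u (n + k + 4) + pell u (k + 2) * pell u n
    linear_combination pell u (n + 2) * pell_add_two u (k + 2) + u * h1 + h0
      - u * pell_add_two u (n + k + 2) - pell u n * pell_add_two u k

theorem pell_div_mul_pell_add_two (hu : 0 < u) {k : ℕ} (hk : Even k) (hk2 : 2 ≤ k) (n : ℕ) :
    pell u k / u * pell u (n + 2) = pell u (n + k) + pell u (k - 2) / u * pell u n := by
  obtain ⟨j, rfl⟩ : ∃ j, k = j + 2 := ⟨k - 2, by omega⟩
  have hj : Even j := by simpa [Nat.even_add] using hk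
  apply Nat.eq_of_mul_eq_mul_left hu
  rw [Nat.add_sub_cancel, mul_add, ← mul_assoc, ← mul_assoc,
    Nat.mul_div_cancel' (dvd_pell_of_even u hk), Nat.mul_div_cancel' (dvd_pell_of_even u hj),
    pell_add_two_mul_pell_add_two, add_assoc]

end PellNumbers

section Representations

variable {a b c : ℕ}

theorem finite_reps (ha : 0 < a) (hb : 0 < b) (hc : 0 < c) (m : ℕ) :
    Finite {t : ℕ × ℕ × ℕ // t.1 * a + t.2.1 * b + t.2.2 * c = m} := by
  have hfin : {t : ℕ × ℕ × ℕ | t.1 * a + t.2.1 * b + t.2.2 * c = m}.Finite :=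
    ((Set.finite_Iic m).prod ((Set.finite_Iic m).prod (Set.finite_Iic m))).subset fun t ht => by
      simp only [Set.mem_ofPred_eq] at ht
      simp only [Set.mem_prod, Set.mem_Iic]
      refine ⟨?_, ?_, ?_⟩ <;> nlinarith
  exact hfin.to_subtype

theorem card_le_reps (ha : 0 < a) (hb : 0 < b) (hc : 0 < c) {m : ℕ} (S : Finset (ℕ × ℕ))
    (hS : ∀ yz ∈ S, yz.1 * b + yz.2 * c ≤ m ∧ yz.1 * b + yz.2 * c ≡ m [MOD a]) :
    S.card ≤ reps a b c m := by
  have := finite_reps ha hb hc m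
  have hrep : ∀ yz ∈ S, (m - (yz.1 * b + yz.2 * c)) / a * a + yz.1 * b + yz.2 * c = m := by
    intro yz hyz
    obtain ⟨hle, hmod⟩ := hS yz hyz
    rw [Nat.div_mul_cancel ((Nat.modEq_iff_dvd' hle).mp hmod)]
    omega
  let f : S → {t : ℕ × ℕ × ℕ // t.1 * a + t.2.1 * b + t.2.2 * c = m} :=
    fun yz => ⟨((m - (yz.1.1 * b + yz.1.2 * c)) / a, yz.1), hrep yz.1 yz.2⟩
  have hf : f.Injective := fun x y hxy => Subtype.ext (congrArg (fun t => t.1.2) hxy)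
  simpa [reps] using Nat.card_le_card_of_injective f hf

end Representations

def ladder (L t s k : ℕ) : Finset (ℕ × ℕ) :=
  (Finset.range k).image fun j => (t + j * L, s - j)

theorem card_ladder (L t : ℕ) {s k : ℕ} (hk : k ≤ s + 1) : (ladder L t s k).card = k := by
  rw [ladder, Finset.card_image_of_injOn, Finset.card_range]
  intro i hi j hj hij
  simp only [Finset.coe_range, Set.mem_Iio, Prod.mk.injEq] at hi hj hij
  omega

theorem weight_of_mem_ladder {L t s k : ℕ} {yz : ℕ × ℕ} (hyz : yz ∈ ladder L t s k)
    (hk : k ≤ s + 1) : yz.1 + yz.2 * L = t + s * L := by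
  obtain ⟨j, hj, rfl⟩ := Finset.mem_image.mp hyz
  have hjs : j ≤ s := by rw [Finset.mem_range] at hj; omega
  obtain ⟨w, rfl⟩ := Nat.exists_eq_add_of_le hjs
  simp only [Nat.add_sub_cancel_left]
  ring

theorem value_add_le_of_weight_lt {a b c L q r p G t s : ℕ} (hdiv : q * L + r = a) (hr : r < L)
    (hG1 : 1 ≤ r → (r - 1) * b + (q + p) * c ≤ G) (hG2 : (L - 1) * b + (q + p - 1) * c ≤ G)
    (ht : t < L) (hts : t + s * L < a) : t * b + (s + p) * c ≤ G := by
  have hsq : s ≤ q := Nat.lt_succ_iff.mp (Nat.lt_of_mul_lt_mul_right (a := L) (by nlinarith))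
  rcases lt_or_ge t r with htr | hrt
  · refine le_trans ?_ (hG1 (by omega))
    have := Nat.mul_le_mul_right b (show t ≤ r - 1 by omega)
    have := Nat.mul_le_mul_right c (show s + p ≤ q + p by omega)
    omega
  · have hsq' : s < q := by
      rcases hsq.lt_or_eq with hlt | rfl
      · exact hlt
      · omega
    refine le_trans ?_ hG2
    have := Nat.mul_le_mul_right b (show t ≤ L - 1 by omega)
    have := Nat.mul_le_mul_right c (show s + p ≤ q + p - 1 by omega)
    omega

structure IsLadderTriple (a b c L E : ℕ) : Prop where
  pos : 0 < a
  lt : a < b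
  coprime : Nat.Coprime a b
  mul_eq : L * b = c + E * a
  mul_le : E * a ≤ c
  le : L ≤ a
  two_le : 2 ≤ L

namespace IsLadderTriple

variable {a b c L E : ℕ}

theorem pos_right (h : IsLadderTriple a b c L E) : 0 < c := by
  have := h.mul_eq; have := h.mul_le; have := h.lt; have := h.two_le
  nlinarith

theorem weight_mul_eq (h : IsLadderTriple a b c L E) (y z : ℕ) :
    (y + z * L) * b = y * b + z * c + z * E * a := by
  linear_combination z * h.mul_eq

theorem modEq_weight (h : IsLadderTriple a b c L E) (y z : ℕ) :
    y * b + z * c ≡ (y + z * L) * b [MOD a] := by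
  rw [h.weight_mul_eq]
  exact (Nat.add_mul_mod_self_right _ _ _).symm

theorem value_le_of_mem_ladder (h : IsLadderTriple a b c L E) {t s k : ℕ} {yz : ℕ × ℕ}
    (hyz : yz ∈ ladder L t s (k + 1)) (hk : k ≤ s) :
    yz.1 * b + yz.2 * c ≤ t * b + (s + k) * c := by
  obtain ⟨j, hj, rfl⟩ := Finset.mem_image.mp hyz
  have hjk : j ≤ k := by rw [Finset.mem_range] at hj; omega
  obtain ⟨w, rfl⟩ := Nat.exists_eq_add_of_le (hjk.trans hk)
  have := h.mul_eq; have := h.mul_le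
  simp only [Nat.add_sub_cancel_left]
  nlinarith

theorem le_value_of_modEq (h : IsLadderTriple a b c L E) {t s y z : ℕ} (ht : t < L)
    (hle : t + s * L ≤ y + z * L) (hmod : y + z * L ≡ t + s * L [MOD a]) :
    t * b + s * c ≤ y * b + z * c := by
  obtain ⟨M, hM⟩ := (Nat.modEq_iff_dvd' hle).mp hmod.symm
  have hW : y + z * L = t + s * L + a * M := by omega
  -- the weight exceeds that of `(t, s)` by `M a`, so the value exceeds `t b + s c` by
  -- `M a b - (z - s) E a`
  have hzE : z * E ≤ s * E + M * b := by
    refine Nat.le_of_mul_le_mul_left ?_ (by omega : 0 < L)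
    rcases M.eq_zero_or_pos with rfl | hMpos
    · have hzs : z < s + 1 := Nat.lt_of_mul_lt_mul_right (a := L) (by linarith)
      have := Nat.mul_le_mul_right E (Nat.lt_succ_iff.mp hzs)
      nlinarith
    · have htE : t * E ≤ M * c := by nlinarith [h.mul_le, h.le]
      have hzL : z * L * E ≤ (t + s * L + a * M) * E := Nat.mul_le_mul_right E (by omega)
      have hMb : M * (L * b) = M * (c + E * a) := by rw [h.mul_eq]
      linarith
  have hWb : (y + z * L) * b = (t + s * L + a * M) * b := by rw [hW]
  have hy := h.weight_mul_eq y z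
  have ht := h.weight_mul_eq t s
  have hzEa := Nat.mul_le_mul_right a hzE
  linarith

theorem weight_add_le_of_rep (h : IsLadderTriple a b c L E) {t s m x y z : ℕ} (ht : t < L)
    (hm : m + a = t * b + s * c) (hxyz : x * a + y * b + z * c = m) :
    y + z * L + a ≤ t + s * L ∧ y + z * L ≡ t + s * L [MOD a] := by
  have hmod : y + z * L ≡ t + s * L [MOD a] := by
    refine Nat.ModEq.cancel_right_of_coprime h.coprime ?_
    calc (y + z * L) * b ≡ y * b + z * c [MOD a] := (h.modEq_weight y z).symm
      _ ≡ y * b + z * c + (x + 1) * a [MOD a] := (Nat.add_mul_mod_self_right _ _ _).symm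
      _ = t * b + s * c := by linarith
      _ ≡ (t + s * L) * b [MOD a] := h.modEq_weight t s
  refine ⟨?_, hmod⟩
  rcases le_or_gt (t + s * L) (y + z * L) with hle | hlt
  · have := h.le_value_of_modEq ht hle hmod
    have := h.pos
    nlinarith
  · have hdvd := (Nat.modEq_iff_dvd' hlt.le).mp hmod
    have := Nat.le_of_dvd (by omega) hdvd
    omega

theorem reps_le_of_add_eq (h : IsLadderTriple a b c L E) {p t s m : ℕ} (ht : t < L)
    (hpa : p * L ≤ a) (hN : t + s * L < a + p * L) (hm : m + a = t * b + s * c) :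
    reps a b c m ≤ p := by
  have hz : ∀ x : {x : ℕ × ℕ × ℕ // x.1 * a + x.2.1 * b + x.2.2 * c = m},
      x.1.2.1 < a ∧ x.1.2.2 < p := by
    rintro ⟨⟨x, y, z⟩, hxyz⟩
    dsimp only at hxyz ⊢
    have := (h.weight_add_le_of_rep ht hm hxyz).1
    exact ⟨by omega, Nat.lt_of_mul_lt_mul_right (a := L) (by omega)⟩
  let f : {x : ℕ × ℕ × ℕ // x.1 * a + x.2.1 * b + x.2.2 * c = m} → Fin p :=
    fun x => ⟨x.1.2.2, (hz x).2⟩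
  have hf : f.Injective := by
    rintro ⟨⟨x, y, z⟩, hxyz⟩ ⟨⟨x', y', z'⟩, hxyz'⟩ hzz
    dsimp only at hxyz hxyz'
    obtain rfl : z = z' := congrArg Fin.val hzz
    have hmod := (h.weight_add_le_of_rep ht hm hxyz).2.trans
      (h.weight_add_le_of_rep ht hm hxyz').2.symm
    obtain rfl : y = y' := (Nat.ModEq.add_right_cancel' _ hmod).eq_of_lt_of_lt
      (hz ⟨(x, y, z), hxyz⟩).1 (hz ⟨(x', y', z), hxyz'⟩).1
    obtain rfl : x = x' := Nat.eq_of_mul_eq_mul_right h.pos (by omega)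
    rfl
  simpa [reps] using Nat.card_le_card_of_injective f hf

theorem exists_finset_value_le_weight_modEq (h : IsLadderTriple a b c L E) {q r p G n : ℕ}
    (hdiv : q * L + r = a) (hr : r < L) (hpq : p ≤ q)
    (hG1 : 1 ≤ r → (r - 1) * b + (q + p) * c ≤ G)
    (hG2 : (L - 1) * b + (q + p - 1) * c ≤ G) (hn : n < a) :
    ∃ S : Finset (ℕ × ℕ), p + 1 ≤ S.card ∧
      ∀ yz ∈ S, yz.1 * b + yz.2 * c ≤ G ∧ yz.1 + yz.2 * L ≡ n [MOD a] := by
  have hL : 0 < L := by omega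
  have hLa := h.le
  obtain ⟨t, s, ht, rfl⟩ : ∃ t s, t < L ∧ t + s * L = n :=
    ⟨_, _, Nat.mod_lt n hL, Nat.mod_add_div' n L⟩
  obtain ⟨t', s', ht', hW⟩ : ∃ t' s', t' < L ∧ t' + s' * L = t + s * L + a :=
    ⟨_, _, Nat.mod_lt _ hL, Nat.mod_add_div' _ L⟩
  have hss' : s + 1 ≤ s' := Nat.lt_of_mul_lt_mul_right (a := L) (by omega)
  have hqs' : q ≤ s' := Nat.lt_succ_iff.mp (Nat.lt_of_mul_lt_mul_right (a := L) (by nlinarith))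
  refine ⟨ladder L t s (min s p + 1) ∪ ladder L t' s' (p - s), ?_, ?_⟩
  · have hdisj : Disjoint (ladder L t s (min s p + 1)) (ladder L t' s' (p - s)) :=
      Finset.disjoint_left.mpr fun yz h1 h2 => by
        have := weight_of_mem_ladder h1 (by omega)
        have := weight_of_mem_ladder h2 (by omega)
        have := h.pos
        omega
    rw [Finset.card_union_of_disjoint hdisj, card_ladder _ _ (by omega), card_ladder _ _ (by omega)]
    omega
  intro yz hyz
  rcases Finset.mem_union.mp hyz with h1 | h2
  · refine ⟨?_, by rw [weight_of_mem_ladder h1 (by omega)]⟩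
    refine (h.value_le_of_mem_ladder h1 (by omega)).trans ?_
    refine le_trans ?_ (value_add_le_of_weight_lt hdiv hr hG1 hG2 ht hn)
    have := Nat.mul_le_mul_right c (show s + min s p ≤ s + p by omega)
    omega
  · obtain ⟨k, hk⟩ : ∃ k, p - s = k + 1 := ⟨p - s - 1, by
      have := Finset.card_pos.mpr ⟨yz, h2⟩
      rw [card_ladder _ _ (by omega)] at this
      omega⟩
    rw [hk] at h2
    refine ⟨?_, ?_⟩
    · refine (h.value_le_of_mem_ladder h2 (by omega)).trans ?_
      have hbase : t' + (s' - (s + 1)) * L < a := by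
        have := Nat.sub_mul s' (s + 1) L
        have := Nat.mul_le_mul_right L hss'
        have := add_one_mul s L
        omega
      refine le_trans (le_of_eq ?_) (value_add_le_of_weight_lt hdiv hr hG1 hG2 ht' hbase)
      congr 2
      omega
    · rw [weight_of_mem_ladder h2 (by omega), hW]
      exact Nat.add_mod_right _ _

theorem lt_reps_of_lt_add (h : IsLadderTriple a b c L E) {q r p G m : ℕ} (hdiv : q * L + r = a)
    (hr : r < L) (hpq : p ≤ q) (hG1 : 1 ≤ r → (r - 1) * b + (q + p) * c ≤ G)
    (hG2 : (L - 1) * b + (q + p - 1) * c ≤ G) (hm : G < m + a) : p < reps a b c m := by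
  obtain ⟨n, hn, hnb⟩ := Nat.exists_mul_mod_eq_of_coprime m h.coprime.symm h.pos.ne'
  obtain ⟨S, hS, hSG⟩ := h.exists_finset_value_le_weight_modEq hdiv hr hpq hG1 hG2 hn
  refine hS.trans (card_le_reps h.pos (h.pos.trans h.lt) h.pos_right S fun yz hyz => ?_)
  obtain ⟨hval, hw⟩ := hSG yz hyz
  have hmod : yz.1 * b + yz.2 * c ≡ m [MOD a] :=
    (h.modEq_weight _ _).trans ((hw.mul_right b).trans (by rw [mul_comm]; exact hnb))
  refine ⟨?_, hmod⟩
  by_contra hlt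
  have := Nat.le_of_dvd (by omega) ((Nat.modEq_iff_dvd' (not_le.mp hlt).le).mp hmod.symm)
  omega

theorem isGreatest_reps_le (h : IsLadderTriple a b c L E) {q r p t s m : ℕ}
    (hdiv : q * L + r = a) (hr : r < L) (hpq : p ≤ q) (ht : t < L)
    (hG1 : 1 ≤ r → (r - 1) * b + (q + p) * c ≤ t * b + s * c)
    (hG2 : (L - 1) * b + (q + p - 1) * c ≤ t * b + s * c)
    (hN : t + s * L < a + p * L) (hm : m + a = t * b + s * c) :
    IsGreatest {n | reps a b c n ≤ p} m := by
  have hpa : p * L ≤ a := (Nat.mul_le_mul_right L hpq).trans (by omega)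
  refine ⟨h.reps_le_of_add_eq ht hpa hN hm, fun n hn => not_lt.mp fun hlt => ?_⟩
  exact (h.lt_reps_of_lt_add hdiv hr hpq hG1 hG2 (by omega)).not_ge hn

theorem candidates_sub (h : IsLadderTriple a b c L E) (q p r : ℕ) :
    ((r : ℤ) - 1) * b + ((q : ℤ) + p) * c - (((L : ℤ) - 1) * b + ((q : ℤ) + p - 1) * c) =
      r * b - E * a := by
  have hLb : (L : ℤ) * b = c + E * a := by exact_mod_cast h.mul_eq
  linear_combination -hLb

theorem exists_isGreatest_of_lt (h : IsLadderTriple a b c L E) {q r p : ℕ}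
    (hdiv : q * L + r = a) (hr : r < L) (hpq : p ≤ q) (hlt : E * a < r * b) :
    ∃ g : ℕ, IsGreatest {m | reps a b c m ≤ p} g ∧
      (g : ℤ) = ((r : ℤ) - 1) * b + ((q : ℤ) + p) * c - a := by
  have hr1 : 1 ≤ r := Nat.pos_of_ne_zero (by rintro rfl; simp at hlt)
  have hG2 : (L - 1) * b + (q + p - 1) * c ≤ (r - 1) * b + (q + p) * c := by
    have hq1 : 1 ≤ q := Nat.pos_of_ne_zero (by rintro rfl; have := h.le; omega)
    zify [hr1, h.two_le.trans' one_le_two, hq1.trans (Nat.le_add_right q p)] at hlt ⊢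
    linarith [h.candidates_sub q p r]
  have haG : a ≤ (r - 1) * b + (q + p) * c := by
    have := Nat.mul_le_mul_right b (show 1 ≤ L - 1 by have := h.two_le; omega)
    have := h.lt
    omega
  refine ⟨_, h.isGreatest_reps_le hdiv hr hpq (by omega) (fun _ => le_rfl) hG2 ?_
    (Nat.sub_add_cancel haG), by push_cast [Nat.cast_sub haG, Nat.cast_sub hr1]; ring⟩
  have := add_mul q p L
  omega

theorem exists_isGreatest_of_le (h : IsLadderTriple a b c L E) {q r p : ℕ}
    (hdiv : q * L + r = a) (hr : r < L) (hpq : p ≤ q) (hle : r * b ≤ E * a) :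
    ∃ g : ℕ, IsGreatest {m | reps a b c m ≤ p} g ∧
      (g : ℤ) = ((L : ℤ) - 1) * b + ((q : ℤ) + p - 1) * c - a := by
  have hL1 : 1 ≤ L := h.two_le.trans' one_le_two
  have hq1 : 1 ≤ q := Nat.pos_of_ne_zero (by rintro rfl; have := h.le; omega)
  have hqp : 1 ≤ q + p := hq1.trans (Nat.le_add_right q p)
  have hG1 : 1 ≤ r → (r - 1) * b + (q + p) * c ≤ (L - 1) * b + (q + p - 1) * c := by
    intro hr1
    zify [hr1, hL1, hqp] at hle ⊢
    linarith [h.candidates_sub q p r]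
  have haG : a ≤ (L - 1) * b + (q + p - 1) * c := by
    have := Nat.mul_le_mul_right b (show 1 ≤ L - 1 by have := h.two_le; omega)
    have := h.lt
    omega
  refine ⟨_, h.isGreatest_reps_le hdiv hr hpq (by omega) hG1 le_rfl ?_ (Nat.sub_add_cancel haG),
    by push_cast [Nat.cast_sub haG, Nat.cast_sub hL1, Nat.cast_sub hqp]; ring⟩
  have := add_mul q p L
  have := Nat.sub_one_mul (q + p) L
  have := Nat.mul_le_mul_right L hqp
  omega

end IsLadderTriple

theorem isLadderTriple_pell {u i k : ℕ} (hu : 0 < u) (hk : Even k) (hk4 : 4 ≤ k)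
    (hki : k ≤ 2 * i) :
    IsLadderTriple (pell u (2 * i + 1)) (pell u (2 * i + 3)) (pell u (2 * i + k + 1))
      (pell u k / u) (pell u (k - 2) / u) := by
  have hmul : pell u k / u * pell u (2 * i + 3) =
      pell u (2 * i + k + 1) + pell u (k - 2) / u * pell u (2 * i + 1) := by
    have := pell_div_mul_pell_add_two hu hk (by omega) (2 * i + 1)
    rwa [show 2 * i + 1 + k = 2 * i + k + 1 by ring] at this
  have hab : 2 * pell u (2 * i + 1) ≤ pell u (2 * i + 3) := by
    have := pell_mono hu (show 2 * i + 1 ≤ 2 * i + 2 by omega)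
    have := Nat.le_mul_of_pos_left (pell u (2 * i + 2)) hu
    show _ ≤ u * pell u (2 * i + 2) + pell u (2 * i + 1)
    omega
  have hEL : pell u (k - 2) / u ≤ pell u k / u := Nat.div_le_div_right (pell_mono hu (by omega))
  refine ⟨pell_pos hu _, ?_, pell_coprime_pell_add_two_of_odd u i, hmul, ?_, ?_, ?_⟩
  · have := pell_pos hu (2 * i)
    omega
  · nlinarith [Nat.mul_le_mul hEL hab]
  · exact (Nat.div_le_self _ _).trans (pell_mono hu (by omega))
  · rw [Nat.le_div_iff_mul_le hu]
    have h3 : pell u 3 = u ^ 2 + 1 := by simpa [pell] using pell_add_three u 0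
    have := pell_mono hu (show 3 ≤ k by omega)
    nlinarith

theorem mul_pell_gt_iff (u n r E : ℕ) :
    (u * r * pell u n : ℤ) > ((E : ℤ) - (u ^ 2 + 1) * r) * pell u (n + 1) ↔
      E * pell u (n + 1) < r * pell u (n + 3) := by
  rw [← Nat.cast_lt (α := ℤ), pell_add_three]
  push_cast
  constructor <;> intro h <;> linarith

theorem stmt_18_general (u : ℕ) (hu : 2 ≤ u) (i k p : ℕ) (hkeven : Even k)
    (hk4 : 4 ≤ k) (hk : k ≤ 2 * i)
    (q r : ℕ) (hq : q = u * pell u (2 * i + 1) / pell u k)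
    (hr : (r : ℤ) = (pell u (2 * i + 1) : ℤ) - q * ((pell u k / u : ℕ) : ℤ))
    (hp : p ≤ q) :
    ∃ g : ℕ, IsGreatest {m : ℕ |
        reps (pell u (2 * i + 1)) (pell u (2 * i + 3)) (pell u (2 * i + k + 1)) m ≤ p} g ∧
      ((u * r * pell u (2 * i) : ℤ) >
          (((pell u (k - 2) / u : ℕ) : ℤ) - (u ^ 2 + 1) * r) * pell u (2 * i + 1) →
        (g : ℤ) = ((r : ℤ) - 1) * pell u (2 * i + 3)
          + ((q : ℤ) + p) * pell u (2 * i + k + 1) - pell u (2 * i + 1)) ∧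
      (¬ ((u * r * pell u (2 * i) : ℤ) >
          (((pell u (k - 2) / u : ℕ) : ℤ) - (u ^ 2 + 1) * r) * pell u (2 * i + 1)) →
        (g : ℤ) = (((pell u k / u : ℕ) : ℤ) - 1) * pell u (2 * i + 3)
          + ((q : ℤ) + p - 1) * pell u (2 * i + k + 1) - pell u (2 * i + 1)) := by
  have hu0 : 0 < u := by omega
  have h := isLadderTriple_pell hu0 hkeven hk4 hk
  have hq' : q = pell u (2 * i + 1) / (pell u k / u) := by
    rw [hq]
    nth_rewrite 1 [← Nat.mul_div_cancel' (dvd_pell_of_even u hkeven)]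
    exact Nat.mul_div_mul_left _ _ hu0
  have hdiv : q * (pell u k / u) + r = pell u (2 * i + 1) := by
    zify at hr ⊢
    linarith
  have hrL : r < pell u k / u := by
    have := Nat.div_add_mod' (pell u (2 * i + 1)) (pell u k / u)
    have := Nat.mod_lt (pell u (2 * i + 1)) (h.two_le.trans_lt' two_pos)
    rw [← hq'] at *
    omega
  rw [mul_pell_gt_iff]
  by_cases hlt : pell u (k - 2) / u * pell u (2 * i + 1) < r * pell u (2 * i + 3)
  · obtain ⟨g, hg, hgv⟩ := h.exists_isGreatest_of_lt hdiv hrL hp hlt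
    exact ⟨g, hg, fun _ => hgv, fun hn => absurd hlt hn⟩
  · obtain ⟨g, hg, hgv⟩ := h.exists_isGreatest_of_le hdiv hrL hp (not_lt.mp hlt)
    exact ⟨g, hg, fun hc => absurd hc hlt, fun _ => hgv⟩

theorem stmt_18 (u : ℕ) (hu : 2 ≤ u) (i k p : ℕ) (hi : 2 ≤ i) (hkeven : Even k)
    (hk4 : 4 ≤ k) (hk : k ≤ 2 * i)
    (q r : ℕ) (hq : q = u * pell u (2 * i + 1) / pell u k)
    (hr : (r : ℤ) = (pell u (2 * i + 1) : ℤ) - q * ((pell u k / u : ℕ) : ℤ))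
    (hp : p ≤ q) :
    ∃ g : ℕ, IsGreatest {m : ℕ |
        reps (pell u (2 * i + 1)) (pell u (2 * i + 3)) (pell u (2 * i + k + 1)) m ≤ p} g ∧
      ((u * r * pell u (2 * i) : ℤ) >
          (((pell u (k - 2) / u : ℕ) : ℤ) - (u ^ 2 + 1) * r) * pell u (2 * i + 1) →
        (g : ℤ) = ((r : ℤ) - 1) * pell u (2 * i + 3)
          + ((q : ℤ) + p) * pell u (2 * i + k + 1) - pell u (2 * i + 1)) ∧
      (¬ ((u * r * pell u (2 * i) : ℤ) >
          (((pell u (k - 2) / u : ℕ) : ℤ) - (u ^ 2 + 1) * r) * pell u (2 * i + 1)) →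
        (g : ℤ) = (((pell u k / u : ℕ) : ℤ) - 1) * pell u (2 * i + 3)
          + ((q : ℤ) + p - 1) * pell u (2 * i + k + 1) - pell u (2 * i + 1)) :=
  stmt_18_general u hu i k p hkeven hk4 hk q r hq hr hp
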